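/- arXiv:2407.03195 — 6 statements merged into one kernel-verified Lean document; each statement's English description precedes it below -/
import Mathlib

section
/- The sequence a_t(n, ν) defined by a_0 = 1, a_t = (1/(2(1+ν)n))(Σ_{j=0}^{t−1} a_j^{1+ν} + n − t) for 1 ≤ t ≤ n, and a_t = (1/(2(1+ν)n)) Σ_{j=t−n}^{t−1} a_j^{1+ν} for t > n, is monotonically non-increasing: a_{t+1}(n, ν) ≤ a_t(n, ν) for all t ≥ 0. -/
/-- the auxiliary sequence a_t(n,ν) is monotonically non-increasing. -/
theorem aux_seq_antitone (n : ℕ) (hn : 0 < n) (ν : ℝ) (hν0 : 0 < ν) (hν1 : ν ≤ 1)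
    (a : ℕ → ℝ)
    (h0 : a 0 = 1)
    (h1 : ∀ t : ℕ, 1 ≤ t → t ≤ n →
      a t = 1 / (2 * (1 + ν) * n) *
        ((∑ j ∈ Finset.range t, a j ^ (1 + ν)) + (n : ℝ) - (t : ℝ)))
    (h2 : ∀ t : ℕ, n < t →
      a t = 1 / (2 * (1 + ν) * n) * ∑ j ∈ Finset.Ico (t - n) t, a j ^ (1 + ν)) :
    ∀ t : ℕ, a (t + 1) ≤ a t := by
  have hnR : (0:ℝ) < n := by exact_mod_cast hn
  have hc : (0:ℝ) < 1 / (2 * (1 + ν) * n) := by positivity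
  set c : ℝ := 1 / (2 * (1 + ν) * n) with hcdef
  have hcn : c * n ≤ 1 := by
    rw [hcdef]
    rw [div_mul_eq_mul_div, div_le_one (by positivity)]
    nlinarith
  -- bounds: 0 ≤ a t ≤ 1
  have hbnd : ∀ t : ℕ, 0 ≤ a t ∧ a t ≤ 1 := by
    intro t
    induction t using Nat.strong_induction_on with
    | _ t ih =>
      rcases Nat.eq_zero_or_pos t with ht0 | ht1
      · subst ht0; rw [h0]; exact ⟨zero_le_one, le_refl 1⟩
      rcases le_or_gt t n with htn | htn
      · rw [h1 t ht1 htn]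
        have hsum0 : (0:ℝ) ≤ ∑ j ∈ Finset.range t, a j ^ (1 + ν) := by
          apply Finset.sum_nonneg
          intro j hj
          exact Real.rpow_nonneg (ih j (Finset.mem_range.mp hj)).1 _
        have hsum1 : (∑ j ∈ Finset.range t, a j ^ (1 + ν)) ≤ t := by
          calc (∑ j ∈ Finset.range t, a j ^ (1 + ν)) ≤ ∑ _j ∈ Finset.range t, (1:ℝ) := by
                apply Finset.sum_le_sum
                intro j hj
                exact Real.rpow_le_one (ih j (Finset.mem_range.mp hj)).1
                  (ih j (Finset.mem_range.mp hj)).2 (by linarith)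
            _ = t := by simp
        have htnR : (t:ℝ) ≤ n := by exact_mod_cast htn
        constructor
        · apply mul_nonneg hc.le; linarith
        · calc c * ((∑ j ∈ Finset.range t, a j ^ (1 + ν)) + (n:ℝ) - (t:ℝ)) ≤ c * n := by
                apply mul_le_mul_of_nonneg_left _ hc.le; linarith
            _ ≤ 1 := hcn
      · rw [h2 t htn]
        have hsum0 : (0:ℝ) ≤ ∑ j ∈ Finset.Ico (t - n) t, a j ^ (1 + ν) := by
          apply Finset.sum_nonneg
          intro j hj
          exact Real.rpow_nonneg (ih j (Finset.mem_Ico.mp hj).2).1 _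
        have hsum1 : (∑ j ∈ Finset.Ico (t - n) t, a j ^ (1 + ν)) ≤ n := by
          calc (∑ j ∈ Finset.Ico (t - n) t, a j ^ (1 + ν))
              ≤ ∑ _j ∈ Finset.Ico (t - n) t, (1:ℝ) := by
                apply Finset.sum_le_sum
                intro j hj
                exact Real.rpow_le_one (ih j (Finset.mem_Ico.mp hj).2).1
                  (ih j (Finset.mem_Ico.mp hj).2).2 (by linarith)
            _ = n := by
                rw [Finset.sum_const, Nat.card_Ico,
                  show t - (t - n) = n from by omega]; simp
        constructor
        · exact mul_nonneg hc.le hsum0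
        · calc c * (∑ j ∈ Finset.Ico (t - n) t, a j ^ (1 + ν)) ≤ c * n := by
                apply mul_le_mul_of_nonneg_left hsum1 hc.le
            _ ≤ 1 := hcn
  -- main antitone claim
  intro t
  induction t using Nat.strong_induction_on with
  | _ t ih =>
    rcases Nat.eq_zero_or_pos t with ht0 | ht1
    · subst ht0
      rw [h1 1 le_rfl hn, h0]
      simp only [Finset.sum_range_one, h0, Real.one_rpow]
      push_cast
      have he : (1 : ℝ) + (n:ℝ) - 1 = n := by ring
      rw [he]
      exact hcn
    rcases lt_trichotomy t n with htn | htn | htn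
    · -- 1 ≤ t < n : both via h1
      rw [h1 t ht1 htn.le, h1 (t+1) (by omega) (by omega)]
      apply mul_le_mul_of_nonneg_left _ hc.le
      rw [Finset.sum_range_succ]
      have hp : a t ^ (1 + ν) ≤ 1 :=
        Real.rpow_le_one (hbnd t).1 (hbnd t).2 (by linarith)
      push_cast
      linarith
    · -- t = n
      subst htn
      rw [h1 t ht1 le_rfl, h2 (t+1) (by omega)]
      apply mul_le_mul_of_nonneg_left _ hc.le
      have he : t + 1 - t = 1 := by omega
      rw [he, Finset.sum_Ico_eq_sub _ (by omega : 1 ≤ t + 1),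
        Finset.sum_range_succ, Finset.sum_range_one, h0, Real.one_rpow]
      have hp : a t ^ (1 + ν) ≤ 1 :=
        Real.rpow_le_one (hbnd t).1 (hbnd t).2 (by linarith)
      linarith
    · -- t > n
      rw [h2 t htn, h2 (t+1) (by omega)]
      apply mul_le_mul_of_nonneg_left _ hc.le
      have he : t + 1 - n = (t - n) + 1 := by omega
      rw [he, Finset.sum_Ico_succ_top (by omega : t - n + 1 ≤ t),
        Finset.sum_eq_sum_Ico_succ_bot (by omega : t - n < t)]
      -- reduces to a t ^ (1+ν) ≤ a (t-n) ^ (1+ν)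
      have hchain : ∀ k : ℕ, t - n + k ≤ t → a (t - n + k) ≤ a (t - n) := by
        intro k
        induction k with
        | zero => intro _; simp
        | succ k ihk =>
          intro hk
          have h1' : a (t - n + k + 1) ≤ a (t - n + k) := ih (t - n + k) (by omega)
          have h2' : a (t - n + k) ≤ a (t - n) := ihk (by omega)
          calc a (t - n + (k+1)) = a (t - n + k + 1) := by ring_nf
          _ ≤ a (t - n) := le_trans h1' h2'
      have hle : a t ≤ a (t - n) := by
        have := hchain n (by omega)
        rwa [show t - n + n = t by omega] at this
      have hp : a t ^ (1 + ν) ≤ a (t - n) ^ (1 + ν) :=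
        Real.rpow_le_rpow (hbnd t).1 hle (by linarith)
      linarith
end

section
/- For the sequence a_t(n, ν) defined by a_0 = 1, a_t = (1/(2(1+ν)n))(Σ_{j=0}^{t−1} a_j^{1+ν} + n − t) for 1 ≤ t ≤ n, and a_t = (1/(2(1+ν)n)) Σ_{j=t−n}^{t−1} a_j^{1+ν} for t > n, one has the n-step contraction a_t(n, ν) ≤ (1/(2(1+ν))) (a_{t−n}(n, ν))^{1+ν} for all t ≥ n. -/
/-- n-step contraction a_t ≤ (1/(2(1+ν))) a_{t-n}^{1+ν} for t ≥ n. -/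
theorem aux_seq_n_step (n : ℕ) (hn : 0 < n) (ν : ℝ) (hν0 : 0 < ν) (hν1 : ν ≤ 1)
    (a : ℕ → ℝ)
    (h0 : a 0 = 1)
    (h1 : ∀ t : ℕ, 1 ≤ t → t ≤ n →
      a t = 1 / (2 * (1 + ν) * n) *
        ((∑ j ∈ Finset.range t, a j ^ (1 + ν)) + (n : ℝ) - (t : ℝ)))
    (h2 : ∀ t : ℕ, n < t →
      a t = 1 / (2 * (1 + ν) * n) * ∑ j ∈ Finset.Ico (t - n) t, a j ^ (1 + ν)) :
    ∀ t : ℕ, n ≤ t → a t ≤ 1 / (2 * (1 + ν)) * a (t - n) ^ (1 + ν) := by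
  have hnR : (0:ℝ) < n := by exact_mod_cast hn
  have hc : (0:ℝ) < 1 / (2 * (1 + ν) * n) := by positivity
  have hp : (0:ℝ) ≤ 1 + ν := by linarith
  -- unified recursion for t ≥ n
  have key : ∀ t : ℕ, n ≤ t →
      a t = 1 / (2 * (1 + ν) * n) * ∑ j ∈ Finset.Ico (t - n) t, a j ^ (1 + ν) := by
    intro t ht
    rcases eq_or_lt_of_le ht with h | h
    · subst h
      rw [h1 n hn le_rfl, Nat.sub_self, ← Finset.range_eq_Ico]
      ring
    · exact h2 t h
  -- nonnegativity and monotonicity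
  have main : ∀ t : ℕ, 0 ≤ a t ∧ ∀ s : ℕ, s ≤ t → a t ≤ a s := by
    intro t
    induction t using Nat.strong_induction_on with
    | _ t IH =>
      match t with
      | 0 =>
        refine ⟨by rw [h0]; norm_num, ?_⟩
        intro s hs
        interval_cases s
        exact le_rfl
      | (m+1) =>
        have hstep : a (m+1) ≤ a m ∧ 0 ≤ a (m+1) := by
          by_cases hmn : m + 1 ≤ n
          · -- use h1
            have hrec := h1 (m+1) (Nat.succ_le_succ (Nat.zero_le m)) hmn
            have hsumnn : 0 ≤ ∑ j ∈ Finset.range (m+1), a j ^ (1 + ν) := by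
              apply Finset.sum_nonneg
              intro j hj
              exact Real.rpow_nonneg (IH j (by simpa using Finset.mem_range.mp hj)).1 _
            have hnt : ((m:ℝ)+1) ≤ n := by exact_mod_cast hmn
            have hnn : 0 ≤ a (m+1) := by
              rw [hrec]
              push_cast
              apply mul_nonneg hc.le
              linarith
            refine ⟨?_, hnn⟩
            match m with
            | 0 =>
              have : a 1 = 1 / (2 * (1 + ν)) := by
                rw [h1 1 le_rfl hmn, Finset.sum_range_one, h0, Real.one_rpow]
                push_cast
                field_simp
                ring
              rw [this, h0]
              rw [div_le_one (by linarith)]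
              linarith
            | (k+1) =>
              have hk1 : 1 ≤ k + 1 := Nat.succ_le_succ (Nat.zero_le k)
              have hkn : k + 1 ≤ n := le_trans (Nat.le_succ _) hmn
              have hrecm := h1 (k+1) hk1 hkn
              have ham := IH (k+1) (Nat.lt_succ_self _)
              have ham1 : a (k+1) ≤ 1 := by
                have := ham.2 0 (Nat.zero_le _)
                rwa [h0] at this
              have hpow : a (k+1) ^ (1 + ν) ≤ 1 :=
                Real.rpow_le_one ham.1 ham1 hp
              rw [hrec, hrecm, Finset.sum_range_succ]
              have := mul_le_mul_of_nonneg_left (show a (k+1) ^ (1+ν) ≤ 1 from hpow) hc.le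
              push_cast
              nlinarith [this]
          · -- t = m+1 > n, so m ≥ n
            push_neg at hmn
            have hmn' : n ≤ m := Nat.lt_succ_iff.mp hmn
            have ht : n ≤ m + 1 := le_trans hmn' (Nat.le_succ _)
            have hrec := key (m+1) ht
            have hrecm := key m hmn'
            have hshift : m + 1 - n = (m - n) + 1 := by omega
            have hsub : m - n + n = m := Nat.sub_add_cancel hmn'
            -- rewrite both sums over range n
            rw [Finset.sum_Ico_eq_sum_range] at hrec hrecm
            have e1 : m + 1 - (m + 1 - n) = n := by omega
            have e2 : m - (m - n) = n := by omega
            rw [e1] at hrec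
            rw [e2] at hrecm
            have hterm : ∀ i ∈ Finset.range n,
                a (m + 1 - n + i) ^ (1+ν) ≤ a (m - n + i) ^ (1+ν) := by
              intro i hi
              have hi' : i < n := Finset.mem_range.mp hi
              have hidx : m + 1 - n + i = (m - n + i) + 1 := by omega
              have hlt : m - n + i + 1 < m + 1 := by omega
              have h' := IH (m - n + i + 1) hlt
              rw [hidx]
              exact Real.rpow_le_rpow h'.1 (h'.2 (m - n + i) (Nat.le_succ _)) hp
            have hsum : ∑ i ∈ Finset.range n, a (m + 1 - n + i) ^ (1+ν)
                ≤ ∑ i ∈ Finset.range n, a (m - n + i) ^ (1+ν) :=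
              Finset.sum_le_sum hterm
            have hnn : 0 ≤ a (m+1) := by
              rw [hrec]
              apply mul_nonneg hc.le
              apply Finset.sum_nonneg
              intro i hi
              have hi' : i < n := Finset.mem_range.mp hi
              exact Real.rpow_nonneg (IH (m + 1 - n + i) (by omega)).1 _
            refine ⟨?_, hnn⟩
            rw [hrec, hrecm]
            exact mul_le_mul_of_nonneg_left hsum hc.le
        refine ⟨hstep.2, ?_⟩
        intro s hs
        rcases Nat.lt_succ_iff_lt_or_eq.mp (Nat.lt_succ_of_le hs) with h | h
        · exact le_trans hstep.1 ((IH m (Nat.lt_succ_self m)).2 s (Nat.lt_succ_iff.mp h))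
        · rw [h]
        
  -- final bound
  intro t ht
  rw [key t ht, Finset.sum_Ico_eq_sum_range]
  have e1 : t - (t - n) = n := by omega
  rw [e1]
  have hterm : ∀ i ∈ Finset.range n,
      a (t - n + i) ^ (1+ν) ≤ a (t - n) ^ (1+ν) := by
    intro i hi
    exact Real.rpow_le_rpow (main _).1 ((main (t-n+i)).2 (t-n) (Nat.le_add_right _ _)) hp
  calc 1 / (2 * (1 + ν) * n) * ∑ i ∈ Finset.range n, a (t - n + i) ^ (1+ν)
      ≤ 1 / (2 * (1 + ν) * n) * ∑ _i ∈ Finset.range n, a (t - n) ^ (1+ν) :=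
        mul_le_mul_of_nonneg_left (Finset.sum_le_sum hterm) hc.le
    _ = 1 / (2 * (1 + ν)) * a (t - n) ^ (1 + ν) := by
        rw [Finset.sum_const, Finset.card_range, nsmul_eq_mul]
        field_simp
end

section
/- For the sequence a_t(n, ν) defined by a_0 = 1, a_t = (1/(2(1+ν)n))(Σ_{j=0}^{t−1} a_j^{1+ν} + n − t) for 1 ≤ t ≤ n, and a_t = (1/(2(1+ν)n)) Σ_{j=t−n}^{t−1} a_j^{1+ν} for t > n, one has a_{t+1}(n, ν) ≤ c₀ a_t(n, ν) for all t ≥ n, where c₀ = 1 − (1/n)(1 − (1/(2(1+ν)))^{1+ν}). -/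
/-- a_{t+1} ≤ c₀ a_t for t ≥ n, where c₀ = 1 − (1/n)(1 − (1/(2(1+ν)))^{1+ν}). -/
theorem aux_seq_linear (n : ℕ) (hn : 0 < n) (ν : ℝ) (hν0 : 0 < ν) (hν1 : ν ≤ 1)
    (a : ℕ → ℝ)
    (h0 : a 0 = 1)
    (h1 : ∀ t : ℕ, 1 ≤ t → t ≤ n →
      a t = 1 / (2 * (1 + ν) * n) *
        ((∑ j ∈ Finset.range t, a j ^ (1 + ν)) + (n : ℝ) - (t : ℝ)))
    (h2 : ∀ t : ℕ, n < t →
      a t = 1 / (2 * (1 + ν) * n) * ∑ j ∈ Finset.Ico (t - n) t, a j ^ (1 + ν)) :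
    ∀ t : ℕ, n ≤ t → a (t + 1) ≤ (1 - 1 / (n : ℝ) * (1 - (1 / (2 * (1 + ν))) ^ (1 + ν))) * a t := by
  have hν' : (0:ℝ) < 1 + ν := by linarith
  have hn' : (0:ℝ) < n := Nat.cast_pos.mpr hn
  set c : ℝ := 1 / (2 * (1 + ν) * n) with hc_def
  set K : ℝ := 1 / (2 * (1 + ν)) with hK_def
  have h2ν : (0:ℝ) < 2 * (1 + ν) := by linarith
  have hc : 0 < c := div_pos one_pos (mul_pos h2ν hn')
  have hK : 0 < K := div_pos one_pos h2ν
  have hK1 : K ≤ 1 := by rw [hK_def, div_le_one h2ν]; linarith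
  have hcn : c * n = K := by
    rw [hc_def, hK_def]; field_simp
  have hc_eq : c = K / n := (eq_div_iff hn'.ne').mpr hcn
  -- bounds 0 ≤ a t ≤ 1
  have hbd : ∀ t, 0 ≤ a t ∧ a t ≤ 1 := by
    intro t
    induction t using Nat.strong_induction_on with
    | _ t ih =>
      rcases Nat.eq_zero_or_pos t with rfl | htpos
      · simp [h0]
      rcases le_or_gt t n with hle | hgt
      · rw [h1 t htpos hle]
        have hsum0 : 0 ≤ ∑ j ∈ Finset.range t, a j ^ (1 + ν) :=
          Finset.sum_nonneg fun j hj =>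
            Real.rpow_nonneg (ih j (Finset.mem_range.mp hj)).1 _
        have hsum1 : ∑ j ∈ Finset.range t, a j ^ (1 + ν) ≤ t := by
          calc ∑ j ∈ Finset.range t, a j ^ (1 + ν)
              ≤ ∑ _j ∈ Finset.range t, (1:ℝ) := by
                refine Finset.sum_le_sum fun j hj => ?_
                exact Real.rpow_le_one (ih j (Finset.mem_range.mp hj)).1
                  (ih j (Finset.mem_range.mp hj)).2 hν'.le
            _ = t := by simp
        have hts : (t:ℝ) ≤ n := Nat.cast_le.mpr hle
        constructor
        · apply mul_nonneg hc.le; linarith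
        · calc c * ((∑ j ∈ Finset.range t, a j ^ (1 + ν)) + (n:ℝ) - (t:ℝ))
              ≤ c * n := by apply mul_le_mul_of_nonneg_left _ hc.le; linarith
            _ = K := hcn
            _ ≤ 1 := hK1
      · rw [h2 t hgt]
        have hmem : ∀ j ∈ Finset.Ico (t - n) t, 0 ≤ a j ∧ a j ≤ 1 := by
          intro j hj
          exact ih j (Finset.mem_Ico.mp hj).2
        have hsum0 : 0 ≤ ∑ j ∈ Finset.Ico (t - n) t, a j ^ (1 + ν) :=
          Finset.sum_nonneg fun j hj => Real.rpow_nonneg (hmem j hj).1 _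
        have hsum1 : ∑ j ∈ Finset.Ico (t - n) t, a j ^ (1 + ν) ≤ n := by
          calc ∑ j ∈ Finset.Ico (t - n) t, a j ^ (1 + ν)
              ≤ ∑ _j ∈ Finset.Ico (t - n) t, (1:ℝ) := by
                refine Finset.sum_le_sum fun j hj => ?_
                exact Real.rpow_le_one (hmem j hj).1 (hmem j hj).2 hν'.le
            _ = ((t - (t - n) : ℕ) : ℝ) := by simp
            _ = n := by congr 1; omega
        constructor
        · exact mul_nonneg hc.le hsum0
        · calc c * ∑ j ∈ Finset.Ico (t - n) t, a j ^ (1 + ν)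
              ≤ c * n := mul_le_mul_of_nonneg_left hsum1 hc.le
            _ = K := hcn
            _ ≤ 1 := hK1
  -- uniform formula for t ≥ n
  have hA : ∀ s, n ≤ s → a s = c * ∑ j ∈ Finset.Ico (s - n) s, a j ^ (1 + ν) := by
    intro s hs
    rcases eq_or_lt_of_le hs with heq | hlt
    · subst heq
      rw [h1 n hn le_rfl]
      rw [Nat.sub_self, ← Finset.range_eq_Ico]
      ring
    · exact h2 s hlt
  -- non-increasing
  have anti1 : ∀ s, a (s + 1) ≤ a s := by
    intro s
    induction s using Nat.strong_induction_on with
    | _ s ih =>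
      rcases Nat.lt_or_ge s n with hs | hs
      · rw [h1 (s + 1) (Nat.succ_le_succ (Nat.zero_le s)) hs]
        rcases Nat.eq_zero_or_pos s with rfl | hspos
        · rw [h0]
          have : ∑ j ∈ Finset.range (0 + 1), a j ^ (1 + ν) = 1 := by
            simp [h0, Real.one_rpow]
          rw [this]
          push_cast
          calc c * (1 + (n:ℝ) - 1) = c * n := by ring
            _ = K := hcn
            _ ≤ 1 := hK1
        · rw [h1 s hspos hs.le, Finset.sum_range_succ]
          have hfs : a s ^ (1 + ν) ≤ 1 :=
            Real.rpow_le_one (hbd s).1 (hbd s).2 hν'.le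
          apply mul_le_mul_of_nonneg_left _ hc.le
          push_cast
          linarith
      · have chain : ∀ j, j ≤ s → ∀ i, i ≤ j → a j ≤ a i := by
          intro j
          induction j with
          | zero =>
            intro _ i hi
            have : i = 0 := Nat.le_zero.mp hi
            subst this; exact le_rfl
          | succ j ihj =>
            intro hjs i hi
            rcases Nat.lt_or_ge i (j + 1) with h | h
            · exact le_trans (ih j (by omega)) (ihj (by omega) i (by omega))
            · have : i = j + 1 := by omega
              subst this; exact le_rfl
        have hsub : s + 1 - n = (s - n) + 1 := by omega
        rw [hA (s + 1) (by omega), hA s hs, hsub,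
          Finset.sum_Ico_succ_top (by omega : s - n + 1 ≤ s),
          Finset.sum_eq_sum_Ico_succ_bot (by omega : s - n < s)]
        have hmono : a s ≤ a (s - n) := chain s le_rfl (s - n) (by omega)
        have hf : a s ^ (1 + ν) ≤ a (s - n) ^ (1 + ν) :=
          Real.rpow_le_rpow (hbd s).1 hmono hν'.le
        apply mul_le_mul_of_nonneg_left _ hc.le
        linarith
  have anti : Antitone a := antitone_nat_of_succ_le anti1
  -- key bound a s ≤ K * a (s-n)^(1+ν)
  have hkey : ∀ s, n ≤ s → a s ≤ K * a (s - n) ^ (1 + ν) := by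
    intro s hs
    rw [hA s hs]
    have hsum : ∑ j ∈ Finset.Ico (s - n) s, a j ^ (1 + ν)
        ≤ ∑ _j ∈ Finset.Ico (s - n) s, a (s - n) ^ (1 + ν) := by
      refine Finset.sum_le_sum fun j hj => ?_
      exact Real.rpow_le_rpow (hbd j).1 (anti (Finset.mem_Ico.mp hj).1) hν'.le
    have hcard : ∑ _j ∈ Finset.Ico (s - n) s, a (s - n) ^ (1 + ν)
        = (n : ℝ) * a (s - n) ^ (1 + ν) := by
      rw [Finset.sum_const, Nat.card_Ico]
      have : s - (s - n) = n := by omega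
      rw [this, nsmul_eq_mul]
    calc c * ∑ j ∈ Finset.Ico (s - n) s, a j ^ (1 + ν)
        ≤ c * ((n : ℝ) * a (s - n) ^ (1 + ν)) := by
          apply mul_le_mul_of_nonneg_left _ hc.le
          rw [← hcard]; exact hsum
      _ = (c * n) * a (s - n) ^ (1 + ν) := by ring
      _ = K * a (s - n) ^ (1 + ν) := by rw [hcn]
  -- main proof
  intro t ht
  have hsub : t + 1 - n = (t - n) + 1 := by omega
  have hsplit : a (t + 1) = a t + c * (a t ^ (1 + ν) - a (t - n) ^ (1 + ν)) := by
    have e0 := hA t ht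
    rw [Finset.sum_eq_sum_Ico_succ_bot (by omega : t - n < t)] at e0
    rw [hA (t + 1) (by omega), hsub,
      Finset.sum_Ico_succ_top (by omega : t - n + 1 ≤ t)]
    linear_combination -e0
  rcases eq_or_lt_of_le (hbd (t - n)).1 with h0' | hpos
  · -- a (t-n) = 0, everything collapses to 0
    have hat : a t = 0 := by
      have h := hkey t ht
      rw [← h0', Real.zero_rpow hν'.ne', mul_zero] at h
      exact le_antisymm h (hbd t).1
    rw [hat, mul_zero]
    calc a (t + 1) ≤ a t := anti1 t
      _ = 0 := hat
  · set m := a (t - n) with hm_def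
    have hm1 : m ≤ 1 := (hbd _).2
    have hfm_pos : 0 < m ^ (1 + ν) := Real.rpow_pos_of_pos hpos _
    have h_at : a t ≤ K * m ^ (1 + ν) := hkey t ht
    have h_atf : a t ^ (1 + ν) ≤ K ^ (1 + ν) * m ^ (1 + ν) := by
      calc a t ^ (1 + ν) ≤ (K * m ^ (1 + ν)) ^ (1 + ν) :=
            Real.rpow_le_rpow (hbd t).1 h_at hν'.le
        _ = K ^ (1 + ν) * (m ^ (1 + ν)) ^ (1 + ν) :=
            Real.mul_rpow hK.le (Real.rpow_nonneg hpos.le _)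
        _ ≤ K ^ (1 + ν) * m ^ (1 + ν) := by
            apply mul_le_mul_of_nonneg_left _ (Real.rpow_nonneg hK.le _)
            have hb1 : m ^ (1 + ν) ≤ 1 := Real.rpow_le_one hpos.le hm1 hν'.le
            calc (m ^ (1 + ν)) ^ (1 + ν)
                ≤ (m ^ (1 + ν)) ^ (1 : ℝ) :=
                  Real.rpow_le_rpow_of_exponent_ge hfm_pos hb1 (by linarith)
              _ = m ^ (1 + ν) := Real.rpow_one _
    have hKf1 : K ^ (1 + ν) ≤ 1 := Real.rpow_le_one hK.le hK1 hν'.le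
    have hmf_ge : a t / K ≤ m ^ (1 + ν) := by
      rw [div_le_iff₀ hK]
      linarith
    calc a (t + 1) = a t + c * (a t ^ (1 + ν) - m ^ (1 + ν)) := hsplit
      _ ≤ a t + c * ((K ^ (1 + ν) - 1) * m ^ (1 + ν)) := by
          apply add_le_add le_rfl
          apply mul_le_mul_of_nonneg_left _ hc.le
          nlinarith [h_atf]
      _ ≤ a t + c * ((K ^ (1 + ν) - 1) * (a t / K)) := by
          apply add_le_add le_rfl
          apply mul_le_mul_of_nonneg_left _ hc.le
          exact mul_le_mul_of_nonpos_left hmf_ge (by linarith)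
      _ = (1 - 1 / (n : ℝ) * (1 - K ^ (1 + ν))) * a t := by
          rw [hc_eq]; field_simp; ring
end

section
/- Let a_t(n, ν) be the sequence defined by a_0 = 1, a_t = (1/(2(1+ν)n))(Σ_{j=0}^{t−1} a_j^{1+ν} + n − t) for 1 ≤ t ≤ n, and a_t = (1/(2(1+ν)n)) Σ_{j=t−n}^{t−1} a_j^{1+ν} for t > n. If there exist c₁ ∈ (0,1) and t₀ ≥ 0 such that a_{t+1} ≤ c₁ a_t for all t ≥ t₀ + n, then a_{t+1} ≤ c₁^{1+ν} a_t for all t ≥ t₀ + 2n. -/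
/-- if a_{t+1} ≤ c₁ a_t for all t ≥ t₀ + n with c₁ ∈ (0,1), then
a_{t+1} ≤ c₁^{1+ν} a_t for all t ≥ t₀ + 2n. -/
theorem aux_seq_improve (n : ℕ) (hn : 0 < n) (ν : ℝ) (hν0 : 0 < ν) (hν1 : ν ≤ 1)
    (a : ℕ → ℝ)
    (h0 : a 0 = 1)
    (h1 : ∀ t : ℕ, 1 ≤ t → t ≤ n →
      a t = 1 / (2 * (1 + ν) * n) *
        ((∑ j ∈ Finset.range t, a j ^ (1 + ν)) + (n : ℝ) - (t : ℝ)))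
    (h2 : ∀ t : ℕ, n < t →
      a t = 1 / (2 * (1 + ν) * n) * ∑ j ∈ Finset.Ico (t - n) t, a j ^ (1 + ν))
    (c₁ : ℝ) (hc₁0 : 0 < c₁) (hc₁1 : c₁ < 1) (t₀ : ℕ)
    (hlin : ∀ t : ℕ, t₀ + n ≤ t → a (t + 1) ≤ c₁ * a t) :
    ∀ t : ℕ, t₀ + 2 * n ≤ t → a (t + 1) ≤ c₁ ^ (1 + ν) * a t := by
  have hfac : 0 < 1 / (2 * (1 + ν) * n) := by positivity
  -- nonnegativity of a
  have hpos : ∀ t : ℕ, 0 ≤ a t := by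
    intro t
    induction t using Nat.strong_induction_on with
    | _ t ih =>
      rcases Nat.eq_zero_or_pos t with rfl | ht1
      · rw [h0]; norm_num
      rcases le_or_gt t n with hle | hgt
      · rw [h1 t ht1 hle]
        have hs : 0 ≤ ∑ j ∈ Finset.range t, a j ^ (1 + ν) :=
          Finset.sum_nonneg fun j hj =>
            Real.rpow_nonneg (ih j (Finset.mem_range.mp hj)) _
        have : (t : ℝ) ≤ (n : ℝ) := by exact_mod_cast hle
        have h' : 0 ≤ (∑ j ∈ Finset.range t, a j ^ (1 + ν)) + (n : ℝ) - (t : ℝ) := by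
          linarith
        positivity
      · rw [h2 t hgt]
        have hs : 0 ≤ ∑ j ∈ Finset.Ico (t - n) t, a j ^ (1 + ν) :=
          Finset.sum_nonneg fun j hj =>
            Real.rpow_nonneg (ih j (Finset.mem_Ico.mp hj).2) _
        positivity
  intro t ht
  have hnt : n < t := by omega
  have hnt1 : n < t + 1 := by omega
  rw [h2 (t + 1) hnt1, h2 t hnt]
  have hidx : t + 1 - n = (t - n) + 1 := by omega
  have hsum : ∑ j ∈ Finset.Ico (t + 1 - n) (t + 1), a j ^ (1 + ν)
      = ∑ j ∈ Finset.Ico (t - n) t, a (j + 1) ^ (1 + ν) := by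
    rw [hidx]
    rw [← Finset.sum_Ico_add' (fun j => a j ^ (1 + ν)) (t - n) t 1]
  rw [hsum]
  have hterm : ∀ j ∈ Finset.Ico (t - n) t,
      a (j + 1) ^ (1 + ν) ≤ c₁ ^ (1 + ν) * a j ^ (1 + ν) := by
    intro j hj
    obtain ⟨hj1, hj2⟩ := Finset.mem_Ico.mp hj
    have hlin' : a (j + 1) ≤ c₁ * a j := hlin j (by omega)
    have h1 : a (j + 1) ^ (1 + ν) ≤ (c₁ * a j) ^ (1 + ν) :=
      Real.rpow_le_rpow (hpos _) hlin' (by linarith)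
    calc a (j + 1) ^ (1 + ν) ≤ (c₁ * a j) ^ (1 + ν) := h1
      _ = c₁ ^ (1 + ν) * a j ^ (1 + ν) := Real.mul_rpow hc₁0.le (hpos j)
  have hsumle := Finset.sum_le_sum hterm
  rw [← Finset.mul_sum] at hsumle
  calc 1 / (2 * (1 + ν) * ↑n) * ∑ j ∈ Finset.Ico (t - n) t, a (j + 1) ^ (1 + ν)
      ≤ 1 / (2 * (1 + ν) * ↑n) * (c₁ ^ (1 + ν) * ∑ j ∈ Finset.Ico (t - n) t, a j ^ (1 + ν)) :=
        mul_le_mul_of_nonneg_left hsumle hfac.le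
    _ = c₁ ^ (1 + ν) * (1 / (2 * (1 + ν) * ↑n) * ∑ j ∈ Finset.Ico (t - n) t, a j ^ (1 + ν)) := by
        ring
end

section
/- For the sequence a_t(n, ν) defined by a_0 = 1, a_t = (1/(2(1+ν)n))(Σ_{j=0}^{t−1} a_j^{1+ν} + n − t) for 1 ≤ t ≤ n, and a_t = (1/(2(1+ν)n)) Σ_{j=t−n}^{t−1} a_j^{1+ν} for t > n, one has the superlinear rate a_{t+1}(n, ν) ≤ c^{(1+ν)^{⌊t/n⌋ − 1}} a_t(n, ν) for all t ≥ n, where c = 1 − (1/n)(1 − (1/(2(1+ν)))^{1+ν}). -/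
set_option maxHeartbeats 400000


/-- superlinear rate a_{t+1} ≤ c^{(1+ν)^{⌊t/n⌋−1}} a_t for t ≥ n, with c = 1 − (1/n)(1 − (1/(2(1+ν)))^{1+ν}). -/
theorem aux_seq_superlinear (n : ℕ) (hn : 0 < n) (ν : ℝ) (hν0 : 0 < ν) (hν1 : ν ≤ 1)
    (a : ℕ → ℝ)
    (h0 : a 0 = 1)
    (h1 : ∀ t : ℕ, 1 ≤ t → t ≤ n →
      a t = 1 / (2 * (1 + ν) * n) *
        ((∑ j ∈ Finset.range t, a j ^ (1 + ν)) + (n : ℝ) - (t : ℝ)))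
    (h2 : ∀ t : ℕ, n < t →
      a t = 1 / (2 * (1 + ν) * n) * ∑ j ∈ Finset.Ico (t - n) t, a j ^ (1 + ν)) :
    ∀ t : ℕ, n ≤ t →
      a (t + 1) ≤ (1 - 1 / (n : ℝ) * (1 - (1 / (2 * (1 + ν))) ^ (1 + ν)))
        ^ ((1 + ν) ^ (t / n - 1)) * a t := by
  have hn' : (0:ℝ) < n := by exact_mod_cast hn
  have hν' : (0:ℝ) < 1 + ν := by linarith
  set q' : ℝ := 1 / (2 * (1 + ν) * n) with hq'def
  have q'pos : 0 < q' := by rw [hq'def]; positivity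
  set q : ℝ := 1 / (2 * (1 + ν)) with hqdef
  have qpos : 0 < q := by rw [hqdef]; positivity
  have hq'q : q' = q / n := by rw [hq'def, hqdef, div_div]
  have hqlt1 : q < 1 := by
    rw [hqdef, div_lt_one (by linarith)]; linarith
  set Q : ℝ := q ^ (1 + ν) with hQdef
  have Qpos : 0 < Q := Real.rpow_pos_of_pos qpos _
  have Qlt1 : Q < 1 := Real.rpow_lt_one qpos.le hqlt1 (by linarith)
  have hQeq : Q = q * q ^ ν := by
    rw [hQdef, Real.rpow_add qpos, Real.rpow_one]
  set c : ℝ := 1 - 1 / (n : ℝ) * (1 - Q) with hcdef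
  have h1n : 1 / (n:ℝ) ≤ 1 := by
    rw [div_le_one hn']; exact_mod_cast hn
  have h1npos : 0 < 1 / (n:ℝ) := by positivity
  have hc0 : 0 < c := by
    rw [hcdef]
    nlinarith [mul_nonneg (sub_nonneg.mpr h1n) (sub_nonneg.mpr Qlt1.le)]
  have hc1 : c ≤ 1 := by
    rw [hcdef]
    nlinarith
  clear_value q' q Q c
  -- positivity of the sequence
  have pos : ∀ t, 0 < a t := by
    intro t
    induction t using Nat.strong_induction_on with
    | _ t IH =>
      rcases Nat.eq_zero_or_pos t with rfl | hpos
      · rw [h0]; norm_num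
      rcases le_or_gt t n with hle | hlt
      · rw [h1 t hpos hle]
        apply mul_pos q'pos
        have hsp : 0 < ∑ j ∈ Finset.range t, a j ^ (1 + ν) :=
          Finset.sum_pos (fun j hj => Real.rpow_pos_of_pos (IH j (Finset.mem_range.mp hj)) _)
            ⟨0, Finset.mem_range.mpr hpos⟩
        have hcast : (t:ℝ) ≤ n := by exact_mod_cast hle
        linarith
      · rw [h2 t hlt]
        apply mul_pos q'pos
        exact Finset.sum_pos
          (fun j hj => Real.rpow_pos_of_pos (IH j (Finset.mem_Ico.mp hj).2) _)
          (by rw [Finset.nonempty_Ico]; omega)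
  -- bounded by one
  have le_one : ∀ t, a t ≤ 1 := by
    intro t
    induction t using Nat.strong_induction_on with
    | _ t IH =>
      rcases Nat.eq_zero_or_pos t with rfl | hpos
      · rw [h0]
      have hqn : q' * (n:ℝ) ≤ 1 := by
        rw [hq'q, div_mul_eq_mul_div, mul_div_assoc, div_self hn'.ne', mul_one]
        linarith
      rcases le_or_gt t n with hle | hlt
      · rw [h1 t hpos hle]
        have hsle : ∑ j ∈ Finset.range t, a j ^ (1 + ν) ≤ (t:ℝ) := by
          calc ∑ j ∈ Finset.range t, a j ^ (1 + ν)
              ≤ ∑ _j ∈ Finset.range t, (1:ℝ) :=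
                Finset.sum_le_sum (fun j hj =>
                  Real.rpow_le_one (pos j).le (IH j (Finset.mem_range.mp hj)) (by linarith))
            _ = (t:ℝ) := by simp
        have : ∑ j ∈ Finset.range t, a j ^ (1 + ν) + (n:ℝ) - (t:ℝ) ≤ (n:ℝ) := by linarith
        calc q' * (∑ j ∈ Finset.range t, a j ^ (1 + ν) + (n:ℝ) - (t:ℝ))
            ≤ q' * (n:ℝ) := by
              exact mul_le_mul_of_nonneg_left this q'pos.le
          _ ≤ 1 := hqn
      · rw [h2 t hlt]
        have hsle : ∑ j ∈ Finset.Ico (t - n) t, a j ^ (1 + ν) ≤ (n:ℝ) := by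
          calc ∑ j ∈ Finset.Ico (t - n) t, a j ^ (1 + ν)
              ≤ ∑ _j ∈ Finset.Ico (t - n) t, (1:ℝ) :=
                Finset.sum_le_sum (fun j hj =>
                  Real.rpow_le_one (pos j).le (IH j (Finset.mem_Ico.mp hj).2) (by linarith))
            _ = (n:ℝ) := by
                rw [Finset.sum_const, Nat.card_Ico]
                have : t - (t - n) = n := by omega
                rw [this]; simp
        calc q' * ∑ j ∈ Finset.Ico (t - n) t, a j ^ (1 + ν)
            ≤ q' * (n:ℝ) := mul_le_mul_of_nonneg_left hsle q'pos.le
          _ ≤ 1 := hqn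
  -- unified sum formula for t ≥ n
  have hsum : ∀ t, n ≤ t → a t = q' * ∑ j ∈ Finset.Ico (t - n) t, a j ^ (1 + ν) := by
    intro t ht
    rcases eq_or_lt_of_le ht with he | hlt
    · subst he
      rw [h1 n hn le_rfl, Nat.sub_self, ← Finset.range_eq_Ico]
      ring
    · exact h2 t hlt
  -- recursion for t ≥ n
  have recur : ∀ t, n ≤ t →
      a (t + 1) = a t + q' * (a t ^ (1 + ν) - a (t - n) ^ (1 + ν)) := by
    intro t ht
    have e1 := hsum (t + 1) (by omega)
    have e0 := hsum t ht
    have hidx : t + 1 - n = (t - n) + 1 := by omega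
    rw [hidx] at e1
    rw [Finset.sum_Ico_succ_top (by omega : t - n + 1 ≤ t)] at e1
    rw [Finset.sum_eq_sum_Ico_succ_bot (by omega : t - n < t)] at e0
    rw [e1, e0]; ring
  -- one-step antitonicity
  have anti_succ : ∀ t, a (t + 1) ≤ a t := by
    intro t
    induction t using Nat.strong_induction_on with
    | _ t IH =>
      rcases Nat.lt_or_ge t n with hlt | hge
      · rcases Nat.eq_zero_or_pos t with rfl | hpos
        · rw [h0, h1 1 le_rfl (by omega)]
          simp only [Finset.range_one, Finset.sum_singleton, h0, Real.one_rpow, Nat.cast_one]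
          have : (1:ℝ) + (n:ℝ) - 1 = n := by ring
          rw [this, hq'q, div_mul_eq_mul_div, mul_div_assoc, div_self hn'.ne', mul_one]
          linarith
        · have e1 := h1 (t + 1) (by omega) (by omega)
          have e0 := h1 t hpos hlt.le
          rw [Finset.sum_range_succ] at e1
          have hle1 : a t ^ (1 + ν) ≤ 1 :=
            Real.rpow_le_one (pos t).le (le_one t) (by linarith)
          have key : a (t + 1) = a t + q' * (a t ^ (1 + ν) - 1) := by
            rw [e1, e0]; push_cast; ring
          nlinarith
      · have key := recur t hge
        have hmono : a t ≤ a (t - n) := by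
          have chain : ∀ k, k ≤ t → a t ≤ a (t - k) := by
            intro k
            induction k with
            | zero => simp
            | succ k ih =>
              intro hk
              have hik : a t ≤ a (t - k) := ih (by omega)
              have hstep : a (t - (k + 1) + 1) ≤ a (t - (k + 1)) := IH (t - (k + 1)) (by omega)
              have he : t - (k + 1) + 1 = t - k := by omega
              rw [he] at hstep
              exact hik.trans hstep
          exact chain n hge
        have hrle : a t ^ (1 + ν) ≤ a (t - n) ^ (1 + ν) :=
          Real.rpow_le_rpow (pos t).le hmono (by linarith)
        nlinarith
  have anti : Antitone a := antitone_nat_of_succ_le anti_succ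
  -- window bound: a t ≤ q * a (t-n)^(1+ν) for t ≥ n
  have window : ∀ t, n ≤ t → a t ≤ q * a (t - n) ^ (1 + ν) := by
    intro t ht
    rw [hsum t ht]
    have hsle : ∑ j ∈ Finset.Ico (t - n) t, a j ^ (1 + ν) ≤ (n:ℝ) * a (t - n) ^ (1 + ν) := by
      calc ∑ j ∈ Finset.Ico (t - n) t, a j ^ (1 + ν)
          ≤ ∑ _j ∈ Finset.Ico (t - n) t, a (t - n) ^ (1 + ν) :=
            Finset.sum_le_sum (fun j hj =>
              Real.rpow_le_rpow (pos j).le (anti (Finset.mem_Ico.mp hj).1) (by linarith))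
        _ = (n:ℝ) * a (t - n) ^ (1 + ν) := by
            rw [Finset.sum_const, Nat.card_Ico]
            have : t - (t - n) = n := by omega
            rw [this]; simp [nsmul_eq_mul]
    calc q' * ∑ j ∈ Finset.Ico (t - n) t, a j ^ (1 + ν)
        ≤ q' * ((n:ℝ) * a (t - n) ^ (1 + ν)) := mul_le_mul_of_nonneg_left hsle q'pos.le
      _ = q * a (t - n) ^ (1 + ν) := by
          rw [hq'q]; field_simp
  -- base: linear rate c for all t ≥ n
  have base : ∀ t, n ≤ t → a (t + 1) ≤ c * a t := by
    intro t ht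
    have hw := window t ht
    have key := recur t ht
    have hu1 : a (t - n) ^ (1 + ν) ≤ 1 :=
      Real.rpow_le_one (pos (t - n)).le (le_one (t - n)) (by linarith)
    -- (i)  a t / n ≤ q' * a(t-n)^(1+ν)
    have hi : a t / n ≤ q' * a (t - n) ^ (1 + ν) := by
      rw [hq'q, div_mul_eq_mul_div]
      gcongr
    -- (ii) q' * a t^(1+ν) ≤ Q/n * a t
    have hatq : a t ≤ q := by nlinarith
    have hsplit : a t ^ (1 + ν) = a t * a t ^ ν := by
      rw [Real.rpow_add (pos t), Real.rpow_one]
    have hpow : a t ^ ν ≤ q ^ ν := Real.rpow_le_rpow (pos t).le hatq hν0.le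
    have hii : q' * a t ^ (1 + ν) ≤ Q / n * a t := by
      rw [hsplit, hq'q, hQeq]
      have h1' : a t * a t ^ ν ≤ a t * q ^ ν :=
        mul_le_mul_of_nonneg_left hpow (pos t).le
      calc q / ↑n * (a t * a t ^ ν) ≤ q / ↑n * (a t * q ^ ν) := by
            exact mul_le_mul_of_nonneg_left h1' (by positivity)
        _ = q * q ^ ν / ↑n * a t := by ring
    have hrhs : c * a t = a t - a t / n + Q / n * a t := by
      rw [hcdef]; ring
    have key2 : a (t + 1) = a t + q' * a t ^ (1 + ν) - q' * a (t - n) ^ (1 + ν) := by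
      rw [key]; ring
    linarith
  -- main induction
  intro t
  induction t using Nat.strong_induction_on with
  | _ t IH =>
    intro ht
    by_cases h2n : t < 2 * n
    · have hdiv : t / n = 1 := by
        have a1 : 1 ≤ t / n := (Nat.one_le_div_iff hn).mpr ht
        have a2 : t / n < 2 := Nat.div_lt_of_lt_mul (by omega)
        omega
      rw [hdiv]
      norm_num
      exact base t ht
    · push_neg at h2n
      have hm2 : 2 ≤ t / n := (Nat.le_div_iff_mul_le hn).mpr (by omega)
      have hmn : t / n * n ≤ t := Nat.div_mul_le_self t n
      obtain ⟨m, hmdef⟩ : ∃ m, t / n = m := ⟨_, rfl⟩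
      rw [hmdef] at hm2 hmn ⊢
      obtain ⟨C, hCdef⟩ : ∃ C, c ^ ((1 + ν) ^ (m - 2) : ℝ) = C := ⟨_, rfl⟩
      have hCpos : 0 < C := hCdef ▸ Real.rpow_pos_of_pos hc0 _
      have hterm : ∀ i ∈ Finset.range n,
          a (t - n + i + 1) ^ (1 + ν) ≤ C ^ (1 + ν) * a (t - n + i) ^ (1 + ν) := by
        intro i hi
        have hi' := Finset.mem_range.mp hi
        have hjlt : t - n + i < t := by omega
        have hjge : n ≤ t - n + i := by omega
        have hIH := IH (t - n + i) hjlt hjge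
        have hjm : (m - 1) * n ≤ t - n + i := by
          have := Nat.sub_mul m 1 n
          omega
        have hjdiv : m - 1 ≤ (t - n + i) / n := (Nat.le_div_iff_mul_le hn).mpr hjm
        have hexp : ((1 + ν) ^ (m - 2) : ℝ) ≤ ((1 + ν) ^ ((t - n + i) / n - 1) : ℝ) :=
          pow_le_pow_right₀ (by linarith) (by omega)
        have hmono : c ^ (((1 + ν) ^ ((t - n + i) / n - 1) : ℝ)) ≤ C :=
          hCdef ▸ Real.rpow_le_rpow_of_exponent_ge hc0 hc1 hexp
        have hstep : a (t - n + i + 1) ≤ C * a (t - n + i) :=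
          hIH.trans (mul_le_mul_of_nonneg_right hmono (pos _).le)
        calc a (t - n + i + 1) ^ (1 + ν)
            ≤ (C * a (t - n + i)) ^ (1 + ν) :=
              Real.rpow_le_rpow (pos _).le hstep (by linarith)
          _ = C ^ (1 + ν) * a (t - n + i) ^ (1 + ν) :=
              Real.mul_rpow hCpos.le (pos _).le
      have e1 : a (t + 1) = q' * ∑ i ∈ Finset.range n, a (t - n + i + 1) ^ (1 + ν) := by
        rw [h2 (t + 1) (by omega), Finset.sum_Ico_eq_sum_range]
        have hb : t + 1 - (t + 1 - n) = n := by omega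
        rw [hb]
        congr 1
        apply Finset.sum_congr rfl
        intro i _
        have hidx : t + 1 - n + i = t - n + i + 1 := by omega
        rw [hidx]
      have e0 : a t = q' * ∑ i ∈ Finset.range n, a (t - n + i) ^ (1 + ν) := by
        rw [h2 t (by omega), Finset.sum_Ico_eq_sum_range]
        have hb : t - (t - n) = n := by omega
        rw [hb]
      have hsum_le : ∑ i ∈ Finset.range n, a (t - n + i + 1) ^ (1 + ν)
          ≤ C ^ (1 + ν) * ∑ i ∈ Finset.range n, a (t - n + i) ^ (1 + ν) := by
        rw [Finset.mul_sum]; exact Finset.sum_le_sum hterm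
      have hmain : a (t + 1) ≤ C ^ (1 + ν) * a t := by
        rw [e1, e0]
        calc q' * ∑ i ∈ Finset.range n, a (t - n + i + 1) ^ (1 + ν)
            ≤ q' * (C ^ (1 + ν) * ∑ i ∈ Finset.range n, a (t - n + i) ^ (1 + ν)) :=
              mul_le_mul_of_nonneg_left hsum_le q'pos.le
          _ = C ^ (1 + ν) * (q' * ∑ i ∈ Finset.range n, a (t - n + i) ^ (1 + ν)) := by ring
      have hCexp : C ^ (1 + ν) = c ^ (((1 + ν) ^ (m - 1) : ℝ)) := by
        rw [← hCdef, ← Real.rpow_mul hc0.le]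
        have hms : m - 1 = (m - 2) + 1 := by omega
        rw [hms, pow_succ]
      rw [hCexp] at hmain
      exact hmain
end

section
/- Suppose H ∈ ℝ^{d×d} satisfies H ⪰ (μ²/2)I for some μ > 0 (in particular H is invertible with ‖H^{-1}‖ ≤ 2/μ²), and suppose vectors z_1, …, z_n, x* ∈ ℝ^d, gradients g_i of ν-Hölder-smooth functions f_i with f_i(x*) = 0, ‖g_i‖ ≤ L_f, and H x' = Σ_{i=1}^n (g_i(z_i)^T z_i − f_i(z_i)) g_i(z_i) where H = Σ_{i=1}^n g_i(z_i) g_i(z_i)^T. Then ‖x' − x*‖ ≤ (L_f H_ν/((1+ν)μ²)) · 2 · Σ_{i=1}^n ‖z_i − x*‖^{1+ν}. -/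
open scoped RealInnerProductSpace

lemma holder_taylor {d : ℕ} (ν Hν : ℝ) (hν0 : 0 < ν) (hHν : 0 ≤ Hν)
    (f : EuclideanSpace ℝ (Fin d) → ℝ) (g : EuclideanSpace ℝ (Fin d) → EuclideanSpace ℝ (Fin d))
    (hgrad : ∀ x, HasGradientAt f (g x) x)
    (hHol : ∀ u v, ‖g u - g v‖ ≤ Hν * ‖u - v‖ ^ ν)
    (u v : EuclideanSpace ℝ (Fin d)) :
    |f v - f u - ⟪g u, v - u⟫| ≤ Hν / (1 + ν) * ‖v - u‖ ^ (1 + ν) := by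
  set γ : ℝ → EuclideanSpace ℝ (Fin d) := fun t => u + t • (v - u) with hγdef
  have hγ : ∀ t : ℝ, HasDerivAt γ (v - u) t := by
    intro t
    simpa [hγdef] using ((hasDerivAt_id t).smul_const (v - u)).const_add u
  -- continuity of g
  have hrc : Continuous (fun y : ℝ => y ^ ν) :=
    continuous_iff_continuousAt.2 fun x => Real.continuousAt_rpow_const x ν (Or.inr hν0.le)
  have hgc : Continuous g := by
    rw [continuous_iff_continuousAt]
    intro b
    rw [ContinuousAt, tendsto_iff_dist_tendsto_zero]
    have hc : Continuous fun x : EuclideanSpace ℝ (Fin d) => Hν * ‖x - b‖ ^ ν :=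
      continuous_const.mul (hrc.comp ((continuous_id.sub continuous_const).norm))
    have h0 : Filter.Tendsto (fun x : EuclideanSpace ℝ (Fin d) => Hν * ‖x - b‖ ^ ν) (nhds b) (nhds 0) := by
      simpa [Real.zero_rpow hν0.ne'] using (hc.continuousAt (x := b)).tendsto
    exact squeeze_zero (fun x => dist_nonneg)
      (fun x => by simpa [dist_eq_norm] using hHol x b) h0
  have hγc : Continuous γ := by fun_prop
  have hφ : ∀ t : ℝ, HasDerivAt (fun s => f (γ s)) ⟪g (γ t), v - u⟫ t := by
    intro t
    have h1 := ((hgrad (γ t)).hasFDerivAt).comp_hasDerivAt t (hγ t)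
    simp only [InnerProductSpace.toDual_apply_apply] at h1; exact h1
  have hcont : Continuous fun t => ⟪g (γ t), v - u⟫ :=
    ((hgc.comp hγc).inner continuous_const)
  have hint : ∫ t in (0:ℝ)..1, ⟪g (γ t), v - u⟫ = f (γ 1) - f (γ 0) :=
    intervalIntegral.integral_eq_sub_of_hasDerivAt (fun t _ => hφ t)
      (hcont.intervalIntegrable 0 1)
  have hγ0 : γ 0 = u := by simp [hγdef]
  have hγ1 : γ 1 = v := by simp [hγdef]
  have hconst : ∫ t in (0:ℝ)..1, ⟪g u, v - u⟫ = ⟪g u, v - u⟫ := by simp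
  have key : f v - f u - ⟪g u, v - u⟫ = ∫ t in (0:ℝ)..1, ⟪g (γ t) - g u, v - u⟫ := by
    rw [show (fun t => ⟪g (γ t) - g u, v - u⟫) = fun t => ⟪g (γ t), v - u⟫ - ⟪g u, v - u⟫ by
      funext t; rw [inner_sub_left]]
    rw [intervalIntegral.integral_sub (hcont.intervalIntegrable 0 1)
      (continuous_const.intervalIntegrable 0 1), hint, hγ0, hγ1, hconst]
  rw [key]
  have hbound : ∀ t ∈ Set.Ioc (0:ℝ) 1,
      ‖⟪g (γ t) - g u, v - u⟫‖ ≤ Hν * ‖v - u‖ ^ (1 + ν) * t ^ ν := by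
    intro t ht
    have h1 : ‖⟪g (γ t) - g u, v - u⟫‖ ≤ ‖g (γ t) - g u‖ * ‖v - u‖ := by
      simpa using norm_inner_le_norm (𝕜 := ℝ) (g (γ t) - g u) (v - u)
    have h2 : ‖g (γ t) - g u‖ ≤ Hν * (t * ‖v - u‖) ^ ν := by
      have := hHol (γ t) u
      have hγt : ‖γ t - u‖ = t * ‖v - u‖ := by
        simp [hγdef, norm_smul, abs_of_pos ht.1]
      rwa [hγt] at this
    calc ‖⟪g (γ t) - g u, v - u⟫‖ ≤ Hν * (t * ‖v - u‖) ^ ν * ‖v - u‖ :=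
          h1.trans (by
            apply mul_le_mul_of_nonneg_right h2 (norm_nonneg _))
      _ = Hν * ‖v - u‖ ^ (1 + ν) * t ^ ν := by
          rw [Real.mul_rpow ht.1.le (norm_nonneg _),
            Real.rpow_add' (norm_nonneg _) (by positivity), Real.rpow_one]
          ring
  have hIb : IntervalIntegrable (fun t => Hν * ‖v - u‖ ^ (1 + ν) * t ^ ν)
      MeasureTheory.volume 0 1 := by
    exact (continuous_const.mul hrc).intervalIntegrable 0 1
  have := intervalIntegral.norm_integral_le_abs_of_norm_le (f := fun t => ⟪g (γ t) - g u, v - u⟫)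
    (g := fun t => Hν * ‖v - u‖ ^ (1 + ν) * t ^ ν) (μ := MeasureTheory.volume)
    (by
      filter_upwards [MeasureTheory.ae_restrict_mem measurableSet_Ioc] with t ht
      exact hbound t (by simpa [Set.uIoc_of_le (by norm_num : (0:ℝ) ≤ 1)] using ht)) hIb
  refine (this.trans_eq ?_)
  rw [intervalIntegral.integral_const_mul, integral_rpow (Or.inl (by linarith))]
  rw [Real.one_rpow, Real.zero_rpow (by positivity)]
  rw [abs_of_nonneg (by positivity)]
  ring

/-- the key one-step error bound for the incremental Gauss–Newton
update. With `H = Σᵢ gᵢ(zᵢ)gᵢ(zᵢ)ᵀ ⪰ (μ²/2)I` and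
`H x' = Σᵢ (gᵢ(zᵢ)ᵀzᵢ − fᵢ(zᵢ)) gᵢ(zᵢ)`, and `fᵢ(x*) = 0`, one has
`‖x' − x*‖ ≤ (Lf Hν/((1+ν)μ²)) · 2 · Σᵢ ‖zᵢ − x*‖^{1+ν}`. -/
theorem ign_step_bound (d n : ℕ) (ν Hν Lf μ : ℝ)
    (hν0 : 0 < ν) (hν1 : ν ≤ 1) (hHν : 0 < Hν) (hLf : 0 < Lf) (hμ : 0 < μ)
    (f : Fin n → EuclideanSpace ℝ (Fin d) → ℝ)
    (g : Fin n → EuclideanSpace ℝ (Fin d) → EuclideanSpace ℝ (Fin d))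
    (hgrad : ∀ i x, HasGradientAt (f i) (g i x) x)
    (hHol : ∀ i u v, ‖g i u - g i v‖ ≤ Hν * ‖u - v‖ ^ ν)
    (hbnd : ∀ i u, ‖g i u‖ ≤ Lf)
    (xs : EuclideanSpace ℝ (Fin d)) (hxs : ∀ i, f i xs = 0)
    (z : Fin n → EuclideanSpace ℝ (Fin d)) (x' : EuclideanSpace ℝ (Fin d))
    (hPD : ∀ v : EuclideanSpace ℝ (Fin d),
      μ ^ 2 / 2 * ‖v‖ ^ 2 ≤ ⟪v, ∑ i, ⟪g i (z i), v⟫ • g i (z i)⟫)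
    (hx' : ∑ i, ⟪g i (z i), x'⟫ • g i (z i)
        = ∑ i, (⟪g i (z i), z i⟫ - f i (z i)) • g i (z i)) :
    ‖x' - xs‖ ≤ Lf * Hν / ((1 + ν) * μ ^ 2) * 2 * ∑ i, ‖z i - xs‖ ^ (1 + ν) := by
  set w := x' - xs with hw
  set S := ∑ i, ‖z i - xs‖ ^ (1 + ν) with hS
  have hSnn : 0 ≤ S := Finset.sum_nonneg fun i _ => Real.rpow_nonneg (norm_nonneg _) _
  have h1ν : (0:ℝ) < 1 + ν := by linarith
  -- coefficient bound
  have hc : ∀ i, |⟪g i (z i), z i⟫ - f i (z i) - ⟪g i (z i), xs⟫|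
      ≤ Hν / (1 + ν) * ‖z i - xs‖ ^ (1 + ν) := by
    intro i
    have := holder_taylor ν Hν hν0 hHν.le (f i) (g i) (hgrad i) (hHol i) (z i) xs
    rw [hxs i] at this
    have heq : |⟪g i (z i), z i⟫ - f i (z i) - ⟪g i (z i), xs⟫|
        = |0 - f i (z i) - ⟪g i (z i), xs - z i⟫| := by
      rw [inner_sub_right]; rw [abs_sub_comm, abs_sub_comm (0 - f i (z i))]
      congr 1; ring
    rw [heq, ← norm_sub_rev (xs) (z i)] at *
    exact heq ▸ this
  -- linearity step
  have hsum : ∑ i, ⟪g i (z i), w⟫ • g i (z i)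
      = ∑ i, (⟪g i (z i), z i⟫ - f i (z i) - ⟪g i (z i), xs⟫) • g i (z i) := by
    have : ∀ i : Fin n, ⟪g i (z i), w⟫ • g i (z i)
        = ⟪g i (z i), x'⟫ • g i (z i) - ⟪g i (z i), xs⟫ • g i (z i) := by
      intro i; rw [hw, inner_sub_right, sub_smul]
    rw [Finset.sum_congr rfl fun i _ => this i, Finset.sum_sub_distrib, hx',
      ← Finset.sum_sub_distrib]
    exact Finset.sum_congr rfl fun i _ => by simp [sub_smul]
  have hmain : μ ^ 2 / 2 * ‖w‖ ^ 2 ≤ (Hν / (1 + ν) * S) * (Lf * ‖w‖) := by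
    refine (hPD w).trans ?_
    rw [hsum, inner_sum]
    have hterm : ∀ i : Fin n, ⟪w, (⟪g i (z i), z i⟫ - f i (z i) - ⟪g i (z i), xs⟫) • g i (z i)⟫
        ≤ (Hν / (1 + ν) * ‖z i - xs‖ ^ (1 + ν)) * (Lf * ‖w‖) := by
      intro i
      rw [real_inner_smul_right]
      calc (⟪g i (z i), z i⟫ - f i (z i) - ⟪g i (z i), xs⟫) * ⟪w, g i (z i)⟫
          ≤ |(⟪g i (z i), z i⟫ - f i (z i) - ⟪g i (z i), xs⟫) * ⟪w, g i (z i)⟫| := le_abs_self _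
        _ = |⟪g i (z i), z i⟫ - f i (z i) - ⟪g i (z i), xs⟫| * |⟪w, g i (z i)⟫| := abs_mul _ _
        _ ≤ (Hν / (1 + ν) * ‖z i - xs‖ ^ (1 + ν)) * (‖w‖ * ‖g i (z i)‖) := by
            apply mul_le_mul (hc i) _ (abs_nonneg _) (by positivity)
            simpa using norm_inner_le_norm (𝕜 := ℝ) w (g i (z i))
        _ ≤ (Hν / (1 + ν) * ‖z i - xs‖ ^ (1 + ν)) * (Lf * ‖w‖) := by
            apply mul_le_mul_of_nonneg_left _ (by positivity)
            rw [mul_comm Lf ‖w‖]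
            exact mul_le_mul_of_nonneg_left (hbnd i (z i)) (norm_nonneg _)
    refine (Finset.sum_le_sum fun i _ => hterm i).trans (le_of_eq ?_)
    rw [Finset.mul_sum, Finset.sum_mul]
  rcases eq_or_lt_of_le (norm_nonneg w) with h0 | hpos
  · rw [← h0]
    have hco : (0:ℝ) ≤ Lf * Hν / ((1 + ν) * μ ^ 2) * 2 := by positivity
    exact mul_nonneg hco hSnn
  · have h2 : μ ^ 2 / 2 * ‖w‖ ≤ Hν / (1 + ν) * S * Lf := by
      have := hmain
      have h3 : (μ ^ 2 / 2 * ‖w‖) * ‖w‖ ≤ (Hν / (1 + ν) * S * Lf) * ‖w‖ := by nlinarith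
      exact le_of_mul_le_mul_right h3 hpos
    have hμ2 : (0:ℝ) < μ ^ 2 := by positivity
    have h4 := mul_le_mul_of_nonneg_right h2 (le_of_lt (by positivity : (0:ℝ) < 2 / μ ^ 2))
    calc ‖w‖ = (μ ^ 2 / 2 * ‖w‖) * (2 / μ ^ 2) := by field_simp
      _ ≤ (Hν / (1 + ν) * S * Lf) * (2 / μ ^ 2) := h4
      _ = Lf * Hν / ((1 + ν) * μ ^ 2) * 2 * S := by field_simp
end
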